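/- Discretization error bound: let γ_X = (X, d_X(·)) be an l-Lipschitz DMS, meaning |d_X(t)(x,x') − d_X(s)(x,x')| ≤ l·|t−s| for all x, x' ∈ X and s, t ∈ ℝ. For α > 0 define the α-discretized family d_X^α(t) := d_X(⌊t⌋_α) where ⌊t⌋_α is the greatest element of αℤ not exceeding t. Then the identity tripod X ↞ X ↠ X is an (lα)-tripod between γ_X and (X, d_X^α(·)), i.e., for all t ∈ ℝ: min_{s ∈ [t−lα, t+lα]} d_X(s) ≤ d_X^α(t) + 2lα and min_{s ∈ [t−lα, t+lα]} d_X^α(s) ≤ d_X(t) + 2lα pointwise on X × X. Consequently d_dyn(γ_X, γ_X^α) ≤ lα. -/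
import Mathlib


namespace Stmt13

noncomputable def vee {X : Type} (d : ℝ → X → X → ℝ) (a b : ℝ) (x x' : X) : ℝ :=
  sInf ((fun s => d s x x') '' Set.Icc a b)

def IsEpsTripod {X Y Z : Type} (dX : ℝ → X → X → ℝ) (dY : ℝ → Y → Y → ℝ)
    (pX : Z → X) (pY : Z → Y) (ε : ℝ) : Prop :=
  Function.Surjective pX ∧ Function.Surjective pY ∧
  ∀ t : ℝ, ∀ z z' : Z,
    vee dX (t - ε) (t + ε) (pX z) (pX z') ≤ dY t (pY z) (pY z') + 2 * ε ∧
    vee dY (t - ε) (t + ε) (pY z) (pY z') ≤ dX t (pX z) (pX z') + 2 * ε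

/-- The 2-slack interleaving distance between (possibly discretized) DMSs. -/
noncomputable def ddyn {X Y : Type} (dX : ℝ → X → X → ℝ) (dY : ℝ → Y → Y → ℝ) : ℝ :=
  sInf {ε : ℝ | 0 ≤ ε ∧ ∃ (Z : Type) (pX : Z → X) (pY : Z → Y),
    IsEpsTripod dX dY pX pY ε}

/-- `⌊t⌋_α`: the greatest element of `αℤ` not exceeding `t`. -/
noncomputable def floorGrid (α t : ℝ) : ℝ := α * ⌊t / α⌋

lemma vee_le_of_mem {X : Type} {d : ℝ → X → X → ℝ} (hnn : ∀ t x x', 0 ≤ d t x x')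
    {a b s : ℝ} (hs : s ∈ Set.Icc a b) (x x' : X) :
    vee d a b x x' ≤ d s x x' := by
  apply csInf_le
  · exact ⟨0, by rintro _ ⟨u, -, rfl⟩; exact hnn u x x'⟩
  · exact ⟨s, hs, rfl⟩

/-- discretization error bound: for an `l`-Lipschitz DMS `γ_X`,
the identity tripod is an `(lα)`-tripod between `γ_X` and its `α`-discretization,
and consequently `d_dyn(γ_X, γ_X^α) ≤ lα`. -/
theorem discretization_error_bound {X : Type} [Fintype X] [Nonempty X]
    (d : ℝ → X → X → ℝ)
    (hnn : ∀ t x x', 0 ≤ d t x x') (hrefl : ∀ t x, d t x x = 0)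
    (hsymm : ∀ t x x', d t x x' = d t x' x)
    (htri : ∀ t x x' x'', d t x x'' ≤ d t x x' + d t x' x'')
    (l : ℝ) (hl : 0 ≤ l)
    (hlip : ∀ (x x' : X) (s t : ℝ), |d t x x' - d s x x'| ≤ l * |t - s|)
    (α : ℝ) (hα : 0 < α) :
    (∀ (t : ℝ) (x x' : X),
      vee d (t - l * α) (t + l * α) x x' ≤
        d (floorGrid α t) x x' + 2 * (l * α) ∧
      vee (fun s => d (floorGrid α s)) (t - l * α) (t + l * α) x x' ≤
        d t x x' + 2 * (l * α)) ∧
    ddyn d (fun s => d (floorGrid α s)) ≤ l * α := by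
  have hla : 0 ≤ l * α := mul_nonneg hl hα.le
  have hmem : ∀ t : ℝ, t ∈ Set.Icc (t - l * α) (t + l * α) := fun t =>
    ⟨by linarith, by linarith⟩
  have hflr : ∀ t : ℝ, |t - floorGrid α t| ≤ α := by
    intro t
    have h1 : floorGrid α t ≤ t := by
      have := Int.floor_le (t / α)
      calc α * ⌊t / α⌋ ≤ α * (t / α) := by nlinarith
        _ = t := by field_simp
    have h2 : t - floorGrid α t < α := by
      have := Int.lt_floor_add_one (t / α)
      have : t / α < ⌊t / α⌋ + 1 := this
      have : t < α * ⌊t / α⌋ + α := by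
        have h := (div_lt_iff₀ hα).mp this
        nlinarith
      simpa [floorGrid] using by linarith
    rw [abs_le]; constructor <;> [linarith; linarith]
  have hclose : ∀ t x x', |d t x x' - d (floorGrid α t) x x'| ≤ l * α := by
    intro t x x'
    calc |d t x x' - d (floorGrid α t) x x'| ≤ l * |t - floorGrid α t| :=
          hlip x x' (floorGrid α t) t
      _ ≤ l * α := by nlinarith [hflr t, abs_nonneg (t - floorGrid α t)]
  have key : ∀ t x x',
      vee d (t - l * α) (t + l * α) x x' ≤ d (floorGrid α t) x x' + 2 * (l * α) ∧
      vee (fun s => d (floorGrid α s)) (t - l * α) (t + l * α) x x' ≤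
        d t x x' + 2 * (l * α) := by
    intro t x x'
    constructor
    · have := vee_le_of_mem hnn (hmem t) x x' (d := d)
      have h := abs_le.mp (hclose t x x')
      linarith
    · have := vee_le_of_mem (d := fun s => d (floorGrid α s))
        (fun t x x' => hnn _ x x') (hmem t) x x'
      have h := abs_le.mp (hclose t x x')
      linarith
  refine ⟨key, ?_⟩
  apply csInf_le
  · exact ⟨0, fun ε hε => hε.1⟩
  · refine ⟨hla, X, id, id, Function.surjective_id, Function.surjective_id, ?_⟩
    intro t z z'
    exact key t z z'

end Stmt13
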